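/- arXiv:2306.07217 — 7 statements merged into one kernel-verified Lean document; each statement's English description precedes it below -/
import Mathlib

section
/- Let 𝔤 be a Lie algebra over a field K, let V be a 𝔤-module with action denoted ρ, and let Θ : V → 𝔤 be a linear map satisfying the quadratic closure constraint Θ(ρ(Θ(u))(v)) = [Θ(u), Θ(v)] for all u, v ∈ V. Then the binary operation u ∘ v := ρ(Θ(u))(v) makes V a (left) Leibniz algebra, i.e. u ∘ (v ∘ w) = (u ∘ v) ∘ w + v ∘ (u ∘ w) for all u, v, w ∈ V. -/
theorem leibniz_of_embedding_tensor_general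
    (K : Type*) [Field K]
    (g : Type*) [LieRing g] [LieAlgebra K g]
    (V : Type*) [AddCommGroup V] [Module K V]
    [LieRingModule g V]
    (Θ : V →ₗ[K] g)
    (hclosure : ∀ u v : V, Θ ⁅Θ u, v⁆ = ⁅Θ u, Θ v⁆) :
    ∀ u v w : V, ⁅Θ u, ⁅Θ v, w⁆⁆ = ⁅Θ ⁅Θ u, v⁆, w⁆ + ⁅Θ v, ⁅Θ u, w⁆⁆ := by
  intro u v w
  rw [hclosure, leibniz_lie]

/-- Let `𝔤` be a Lie algebra over a field `K`, `V` a `𝔤`-module, and `Θ : V → 𝔤` a linear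
map satisfying the quadratic closure constraint `Θ (Θ(u) ⬝ v) = [Θ u, Θ v]`.  Then the
binary operation `u ∘ v := Θ(u) ⬝ v = ⁅Θ u, v⁆` makes `V` a (left) Leibniz algebra. -/
theorem leibniz_of_embedding_tensor
    (K : Type*) [Field K]
    (g : Type*) [LieRing g] [LieAlgebra K g]
    (V : Type*) [AddCommGroup V] [Module K V]
    [LieRingModule g V] [LieModule K g V]
    (Θ : V →ₗ[K] g)
    (hclosure : ∀ u v : V, Θ ⁅Θ u, v⁆ = ⁅Θ u, Θ v⁆) :
    ∀ u v w : V, ⁅Θ u, ⁅Θ v, w⁆⁆ = ⁅Θ ⁅Θ u, v⁆, w⁆ + ⁅Θ v, ⁅Θ u, w⁆⁆ :=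
  leibniz_of_embedding_tensor_general K g V Θ hclosure
end

section
/- Let (𝔈, ε₁, ε₂⁰, ε₂¹) be an hLie₂-algebra with ε₂¹ = 0. Then ε₂⁰ is graded antisymmetric, ε₂⁰(x,y) = −(−1)^{|x||y|} ε₂⁰(y,x) for all homogeneous x,y ∈ 𝔈, and (𝔈, ε₁, ε₂⁰) is a differential graded Lie algebra. -/
/-- The sign `(-1)^n` for `n : ℤ`, valued in the field `K`. -/
noncomputable def sgn (K : Type*) [Field K] (n : ℤ) : K :=
  ((Int.negOnePow n : ℤ) : K)

/-- An hLie₂-algebra structure on a graded vector space. -/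
structure IsHLie2 (K : Type*) [Field K] [CharZero K] {E : Type*}
    [AddCommGroup E] [Module K E] (G : ℤ → Submodule K E)
    (e1 : E →ₗ[K] E) (e2 : ℤ → E →ₗ[K] E →ₗ[K] E) : Prop where
  /-- `ε₂ⁱ = 0` for `i ∉ {0,1}`. -/
  e2_zero : ∀ i : ℤ, i ≠ 0 → i ≠ 1 → e2 i = 0
  /-- `ε₁` has degree `1`. -/
  e1_deg : ∀ (p : ℤ) (x : E), x ∈ G p → e1 x ∈ G (p + 1)
  /-- `ε₂ⁱ` has degree `-i`. -/
  e2_deg : ∀ (i p q : ℤ) (x y : E), x ∈ G p → y ∈ G q → e2 i x y ∈ G (p + q - i)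
  /-- (R1) -/
  rel1 : ∀ (p : ℤ) (x : E), x ∈ G p → e1 (e1 x) = 0
  /-- (R2) -/
  rel2 : ∀ (i : ℕ) (p q : ℤ) (x₁ x₂ : E), x₁ ∈ G p → x₂ ∈ G q →
    e1 (e2 (i : ℤ) x₁ x₂) =
      sgn K (i : ℤ) • (e2 (i : ℤ) (e1 x₁) x₂ + sgn K p • e2 (i : ℤ) x₁ (e1 x₂))
        + e2 ((i : ℤ) - 1) x₁ x₂ - sgn K ((i : ℤ) + p * q) • e2 ((i : ℤ) - 1) x₂ x₁
  /-- (R3) -/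
  rel3 : ∀ (i : ℕ) (p q r : ℤ) (x₁ x₂ x₃ : E), x₁ ∈ G p → x₂ ∈ G q → x₃ ∈ G r →
    e2 (i : ℤ) (e2 (i : ℤ) x₁ x₂) x₃ =
      sgn K ((i : ℤ) * (p + 1)) • e2 (i : ℤ) x₁ (e2 (i : ℤ) x₂ x₃)
        - sgn K ((p + (i : ℤ)) * q) • e2 (i : ℤ) x₂ (e2 (i : ℤ) x₁ x₃)
        - sgn K ((q + r) * p + ((i : ℤ) - 1) * q) •
            e2 ((i : ℤ) + 1) x₂ (e2 ((i : ℤ) - 1) x₃ x₁)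
  /-- (R4) -/
  rel4 : ∀ (i j : ℕ), j < i → ∀ (p q r : ℤ) (x₁ x₂ x₃ : E),
    x₁ ∈ G p → x₂ ∈ G q → x₃ ∈ G r →
    e2 (j : ℤ) (e2 (i : ℤ) x₁ x₂) x₃ =
      sgn K (1 + (j : ℤ) * ((i : ℤ) + 1) + p * (q + r) + ((j : ℤ) - 1) * q) •
        e2 ((i : ℤ) + 1) x₂ (e2 ((j : ℤ) - 1) x₃ x₁)
  /-- (R5) -/
  rel5 : ∀ (i j : ℕ), j < i → ∀ (p q r : ℤ) (x₁ x₂ x₃ : E),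
    x₁ ∈ G p → x₂ ∈ G q → x₃ ∈ G r →
    e2 (i : ℤ) (e2 (j : ℤ) x₁ x₂) x₃ =
      sgn K ((i : ℤ) * ((j : ℤ) + p)) • e2 (j : ℤ) x₁ (e2 (i : ℤ) x₂ x₃)
        - sgn K ((p + (j : ℤ)) * q) • e2 (i : ℤ) x₂ (e2 (j : ℤ) x₁ x₃)
        - sgn K ((j : ℤ) + r * ((j : ℤ) + q - 1) + p * (q + r)) •
            e2 ((i : ℤ) + 1) x₃ (e2 ((j : ℤ) - 1) x₂ x₁)

/-- A differential graded Lie algebra structure on a graded vector space. -/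
structure IsDGLA (K : Type*) [Field K] {V : Type*} [AddCommGroup V] [Module K V]
    (G : ℤ → Submodule K V) (d : V →ₗ[K] V) (br : V →ₗ[K] V →ₗ[K] V) : Prop where
  d_deg : ∀ (p : ℤ) (x : V), x ∈ G p → d x ∈ G (p + 1)
  d_sq : ∀ (p : ℤ) (x : V), x ∈ G p → d (d x) = 0
  br_deg : ∀ (p q : ℤ) (x y : V), x ∈ G p → y ∈ G q → br x y ∈ G (p + q)
  antisym : ∀ (p q : ℤ) (x y : V), x ∈ G p → y ∈ G q →
    br x y = - (sgn K (p * q) • br y x)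
  jacobi : ∀ (p q r : ℤ) (x y z : V), x ∈ G p → y ∈ G q → z ∈ G r →
    br x (br y z) = br (br x y) z + sgn K (p * q) • br y (br x z)
  leibniz : ∀ (p q : ℤ) (x y : V), x ∈ G p → y ∈ G q →
    d (br x y) = br (d x) y + sgn K p • br x (d y)

/-!
Since `ε₂⁻¹ = 0`, the relations (R2) and (R3) at `i = 0` are exactly the Leibniz rule and the
Jacobi identity for `ε₂⁰`, with no assumption on `ε₂¹`. Relation (R2) at `i = 1` says that the
alternator `ε₂⁰(x, y) + (-1)^{|x||y|} ε₂⁰(y, x)` is the boundary of `ε₂¹` (its graded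
commutator with `ε₁`), so it vanishes when `ε₂¹ = 0`.
-/

lemma sgn_zero (K : Type*) [Field K] : sgn K 0 = 1 := by
  simp [sgn]

lemma sgn_one_add (K : Type*) [Field K] (n : ℤ) : sgn K (1 + n) = -sgn K n := by
  simp [sgn, Int.negOnePow_add]

namespace IsHLie2

variable {K : Type*} [Field K] [CharZero K] {E : Type*} [AddCommGroup E] [Module K E]
  {G : ℤ → Submodule K E} {e1 : E →ₗ[K] E} {e2 : ℤ → E →ₗ[K] E →ₗ[K] E}

lemma e2_neg_one (hE : IsHLie2 K G e1 e2) : e2 (-1) = 0 :=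
  hE.e2_zero (-1) (by decide) (by decide)

lemma e2_zero_mem (hE : IsHLie2 K G e1 e2) (p q : ℤ) (x y : E) (hx : x ∈ G p)
    (hy : y ∈ G q) : e2 0 x y ∈ G (p + q) := by
  simpa using hE.e2_deg 0 p q x y hx hy

lemma e1_e2_zero (hE : IsHLie2 K G e1 e2) (p q : ℤ) (x y : E) (hx : x ∈ G p)
    (hy : y ∈ G q) : e1 (e2 0 x y) = e2 0 (e1 x) y + sgn K p • e2 0 x (e1 y) := by
  simpa [hE.e2_neg_one, sgn_zero] using hE.rel2 0 p q x y hx hy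

lemma e2_zero_jacobi (hE : IsHLie2 K G e1 e2) (p q r : ℤ) (x y z : E) (hx : x ∈ G p)
    (hy : y ∈ G q) (hz : z ∈ G r) :
    e2 0 x (e2 0 y z) = e2 0 (e2 0 x y) z + sgn K (p * q) • e2 0 y (e2 0 x z) := by
  have h := hE.rel3 0 p q r x y z hx hy hz
  simp only [Nat.cast_zero, zero_sub, hE.e2_neg_one, LinearMap.zero_apply, map_zero,
    smul_zero, sub_zero, zero_mul, add_zero, sgn_zero, one_smul] at h
  rw [h]
  abel

lemma e2_zero_antisymm (hE : IsHLie2 K G e1 e2) (h21 : e2 1 = 0) (p q : ℤ) (x y : E)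
    (hx : x ∈ G p) (hy : y ∈ G q) : e2 0 x y = -(sgn K (p * q) • e2 0 y x) := by
  have h := hE.rel2 1 p q x y hx hy
  simp only [Nat.cast_one, h21, sub_self, sgn_one_add, LinearMap.zero_apply, map_zero,
    smul_zero, add_zero, zero_add, neg_smul, sub_neg_eq_add] at h
  exact eq_neg_of_add_eq_zero_left h.symm

lemma isDGLA (hE : IsHLie2 K G e1 e2) (h21 : e2 1 = 0) : IsDGLA K G e1 (e2 0) :=
  ⟨hE.e1_deg, hE.rel1, hE.e2_zero_mem, hE.e2_zero_antisymm h21, hE.e2_zero_jacobi,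
    hE.e1_e2_zero⟩

end IsHLie2

/-- If `(𝔈, ε₁, ε₂⁰, ε₂¹)` is an hLie₂-algebra with `ε₂¹ = 0`, then `ε₂⁰` is graded
antisymmetric and `(𝔈, ε₁, ε₂⁰)` is a differential graded Lie algebra. -/
theorem dgla_of_hLie2_trivial_alternator
    (K : Type*) [Field K] [CharZero K] {E : Type*} [AddCommGroup E] [Module K E]
    (G : ℤ → Submodule K E) (e1 : E →ₗ[K] E) (e2 : ℤ → E →ₗ[K] E →ₗ[K] E)
    (hE : IsHLie2 K G e1 e2) (h21 : e2 1 = 0) :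
    (∀ (p q : ℤ) (x y : E), x ∈ G p → y ∈ G q →
      e2 0 x y = - (sgn K (p * q) • e2 0 y x))
    ∧ IsDGLA K G e1 (e2 0) :=
  ⟨hE.e2_zero_antisymm h21, hE.isDGLA h21⟩
end

section
/- Let 𝔤 be a (left) Leibniz algebra over a field of characteristic zero and let 𝔤^ann denote the linear span of all brackets [x,y], x,y ∈ 𝔤. Set E₋₁ := 𝔤^ann, E₀ := 𝔤, ε₁ := the inclusion 𝔤^ann ↪ 𝔤, ε₂(a,b) := [a,b] whenever at most one of a, b lies in E₋₁ (viewed inside 𝔤), ε₃ := 0, and alt(a,b) := [a,b] + [b,a] ∈ 𝔤^ann for a,b ∈ E₀. Then (E₋₁, E₀, ε₁, ε₂, ε₃, alt) is a 2-term E₂L∞-algebra. -/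
/-- A 2-term E₂L∞-algebra structure on a pair of vector spaces `Em1` (degree −1)
and `E0` (degree 0), with differential `e1`, binary products `e2` (on `E0 × E0`),
`e2r : E0 × Em1 → Em1`, `e2l : Em1 × E0 → Em1`, ternary product `e3` and
alternator `alt`. -/
structure Is2TermE2LInfty (K : Type*) [Field K] [CharZero K]
    {Em1 E0 : Type*} [AddCommGroup Em1] [Module K Em1] [AddCommGroup E0] [Module K E0]
    (e1 : Em1 → E0) (e2 : E0 → E0 → E0) (e2r : E0 → Em1 → Em1) (e2l : Em1 → E0 → Em1)
    (e3 : E0 → E0 → E0 → Em1) (alt : E0 → E0 → Em1) : Prop where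
  lin_e1 : IsLinearMap K e1
  lin_e2_left : ∀ y, IsLinearMap K fun x => e2 x y
  lin_e2_right : ∀ x, IsLinearMap K (e2 x)
  lin_e2r_left : ∀ y, IsLinearMap K fun x => e2r x y
  lin_e2r_right : ∀ x, IsLinearMap K (e2r x)
  lin_e2l_left : ∀ y, IsLinearMap K fun x => e2l x y
  lin_e2l_right : ∀ x, IsLinearMap K (e2l x)
  lin_e3_1 : ∀ y z, IsLinearMap K fun x => e3 x y z
  lin_e3_2 : ∀ x z, IsLinearMap K fun y => e3 x y z
  lin_e3_3 : ∀ x y, IsLinearMap K (e3 x y)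
  lin_alt_left : ∀ y, IsLinearMap K fun x => alt x y
  lin_alt_right : ∀ x, IsLinearMap K (alt x)
  /-- (E1) `ε₂` is a chain map. -/
  E1a : ∀ x y, e1 (e2r x y) = e2 x (e1 y)
  E1b : ∀ x y, e1 (e2l y x) = e2 (e1 y) x
  E1c : ∀ y₁ y₂, e2r (e1 y₁) y₂ = e2l y₁ (e1 y₂)
  /-- (E2) `alt` is a chain homotopy from `ε₂ + ε₂ ∘ σ₁₂` to `0`. -/
  E2a : ∀ x₁ x₂, e2 x₁ x₂ + e2 x₂ x₁ = e1 (alt x₁ x₂)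
  E2b : ∀ x y, e2r x y + e2l y x = alt x (e1 y)
  /-- (E3) `ε₃` is a chain homotopy from the Jacobiator expression to `0`. -/
  E3a : ∀ x₁ x₂ x₃,
    e2 x₁ (e2 x₂ x₃) - e2 (e2 x₁ x₂) x₃ - e2 x₂ (e2 x₁ x₃) = - e1 (e3 x₁ x₂ x₃)
  E3b : ∀ x₁ x₂ y,
    e2r x₁ (e2r x₂ y) - e2r (e2 x₁ x₂) y - e2r x₂ (e2r x₁ y) = - e3 x₁ x₂ (e1 y)
  E3c : ∀ x₁ y x₃,
    e2r x₁ (e2l y x₃) - e2l (e2r x₁ y) x₃ - e2l y (e2 x₁ x₃) = - e3 x₁ (e1 y) x₃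
  E3d : ∀ y x₂ x₃,
    e2l y (e2 x₂ x₃) - e2l (e2l y x₂) x₃ - e2r x₂ (e2l y x₃) = - e3 (e1 y) x₂ x₃
  /-- (E4) -/
  E4 : ∀ x₁ x₂, alt x₁ x₂ = alt x₂ x₁
  /-- (E5) -/
  E5 : ∀ x₁ x₂ x₃, e3 x₁ x₂ x₃ + e3 x₂ x₁ x₃ = e2l (alt x₁ x₂) x₃
  /-- (E6) -/
  E6 : ∀ x₁ x₂ x₃, e3 x₁ x₂ x₃ + e3 x₁ x₃ x₂ =
    alt (e2 x₁ x₂) x₃ + alt x₂ (e2 x₁ x₃) - e2r x₁ (alt x₂ x₃)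
  /-- (E7) -/
  E7 : ∀ x₁ x₂ x₃ x₄,
    e2r x₁ (e3 x₂ x₃ x₄) + e3 x₁ (e2 x₂ x₃) x₄ + e3 x₁ x₃ (e2 x₂ x₄)
      + e2l (e3 x₁ x₂ x₃) x₄ + e2r x₃ (e3 x₁ x₂ x₄)
    = e3 x₁ x₂ (e2 x₃ x₄) + e3 (e2 x₁ x₂) x₃ x₄ + e2r x₂ (e3 x₁ x₃ x₄)
      + e3 x₂ (e2 x₁ x₃) x₄ + e3 x₂ x₃ (e2 x₁ x₄)

/-- A 2-term L∞-algebra structure on vector spaces `Lm1` (degree −1) and `L0`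
(degree 0), with differential `m1`, antisymmetric binary product `m2` (on `L0 × L0`),
mixed product `m2r : L0 × Lm1 → Lm1` (with the convention `μ₂(y,x) = −μ₂(x,y)` for
`x : L0`, `y : Lm1`) and totally antisymmetric ternary product `m3`. -/
structure Is2TermLInfty (K : Type*) [Field K] [CharZero K]
    {Lm1 L0 : Type*} [AddCommGroup Lm1] [Module K Lm1] [AddCommGroup L0] [Module K L0]
    (m1 : Lm1 → L0) (m2 : L0 → L0 → L0) (m2r : L0 → Lm1 → Lm1)
    (m3 : L0 → L0 → L0 → Lm1) : Prop where
  lin_m1 : IsLinearMap K m1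
  lin_m2_left : ∀ y, IsLinearMap K fun x => m2 x y
  lin_m2_right : ∀ x, IsLinearMap K (m2 x)
  lin_m2r_left : ∀ y, IsLinearMap K fun x => m2r x y
  lin_m2r_right : ∀ x, IsLinearMap K (m2r x)
  lin_m3_1 : ∀ y z, IsLinearMap K fun x => m3 x y z
  lin_m3_2 : ∀ x z, IsLinearMap K fun y => m3 x y z
  lin_m3_3 : ∀ x y, IsLinearMap K (m3 x y)
  m2_antisym : ∀ x₁ x₂, m2 x₁ x₂ = - m2 x₂ x₁
  m3_antisym12 : ∀ x₁ x₂ x₃, m3 x₁ x₂ x₃ = - m3 x₂ x₁ x₃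
  m3_antisym23 : ∀ x₁ x₂ x₃, m3 x₁ x₂ x₃ = - m3 x₁ x₃ x₂
  /-- (L1) -/
  L1 : ∀ x y, m1 (m2r x y) = m2 x (m1 y)
  /-- (L2) -/
  L2 : ∀ y₁ y₂, m2r (m1 y₁) y₂ + m2r (m1 y₂) y₁ = 0
  /-- (L3) -/
  L3 : ∀ x₁ x₂ x₃,
    m2 x₁ (m2 x₂ x₃) + m2 x₂ (m2 x₃ x₁) + m2 x₃ (m2 x₁ x₂) = - m1 (m3 x₁ x₂ x₃)
  /-- (L4), written using `μ₂(y,x₁) = −m2r x₁ y` and `μ₂(y, μ₂(x₁,x₂)) = −m2r (m2 x₁ x₂) y`. -/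
  L4 : ∀ x₁ x₂ y,
    m2r x₁ (m2r x₂ y) - m2r x₂ (m2r x₁ y) - m2r (m2 x₁ x₂) y = - m3 x₁ x₂ (m1 y)
  /-- (L5), written using `μ₂(μ₃(·,·,·), x) = −m2r x (m3 · · ·)`. -/
  L5 : ∀ x₁ x₂ x₃ x₄,
    m3 (m2 x₁ x₂) x₃ x₄ - m3 (m2 x₁ x₃) x₂ x₄ + m3 (m2 x₁ x₄) x₂ x₃
      + m3 (m2 x₂ x₃) x₁ x₄ - m3 (m2 x₂ x₄) x₁ x₃ + m3 (m2 x₃ x₄) x₁ x₂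
    = - m2r x₄ (m3 x₁ x₂ x₃) + m2r x₃ (m3 x₁ x₂ x₄)
      - m2r x₂ (m3 x₁ x₃ x₄) + m2r x₁ (m3 x₂ x₃ x₄)


/-- The subspace `𝔤^ann = [𝔤,𝔤]`: the linear span of all brackets. -/
def leibAnn (K : Type*) [Field K] {V : Type*} [AddCommGroup V] [Module K V]
    (br : V →ₗ[K] V →ₗ[K] V) : Submodule K V :=
  Submodule.span K (Set.range fun p : V × V => br p.1 p.2)

lemma br_mem_leibAnn_right (K : Type*) [Field K] {V : Type*} [AddCommGroup V]
    [Module K V] (br : V →ₗ[K] V →ₗ[K] V) (x y : V) : br x y ∈ leibAnn K br :=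
  Submodule.subset_span ⟨(x, y), rfl⟩

lemma br_mem_leibAnn_left (K : Type*) [Field K] {V : Type*} [AddCommGroup V]
    [Module K V] (br : V →ₗ[K] V →ₗ[K] V)
    (hbr : ∀ x y z : V, br x (br y z) = br (br x y) z + br y (br x z))
    (x : V) {y : V} (hy : y ∈ leibAnn K br) : br x y ∈ leibAnn K br := by
  have h : Submodule.span K (Set.range fun p : V × V => br p.1 p.2) ≤
      (leibAnn K br).comap (br x) := by
    apply Submodule.span_le.mpr
    rintro _ ⟨⟨a, b⟩, rfl⟩
    simp only [SetLike.mem_coe, Submodule.mem_comap]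
    rw [hbr x a b]
    exact add_mem (br_mem_leibAnn_right K br _ _) (br_mem_leibAnn_right K br _ _)
  exact h hy

/-!
With `ε₃ = 0` the Jacobiator conditions (E3) are the Leibniz identity itself. The remaining
axioms rest on two consequences of it: a symmetrised bracket `[x, y] + [y, x]` acts trivially
from the left, which is (E5), and left multiplication by `x` is a derivation of the symmetrised
bracket, which is (E6). Everything else holds definitionally or has both sides zero.
-/

/-- A left Leibniz bracket: each `br x` is a derivation of `br`. -/
def IsLeibnizBracket {R V : Type*} [CommSemiring R] [AddCommMonoid V] [Module R V]
    (br : V →ₗ[R] V →ₗ[R] V) : Prop :=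
  ∀ x y z : V, br x (br y z) = br (br x y) z + br y (br x z)

namespace IsLeibnizBracket

section AddCommMonoid

variable {R V : Type*} [CommSemiring R] [AddCommMonoid V] [Module R V]
  {br : V →ₗ[R] V →ₗ[R] V}

theorem apply_symm_bracket (hbr : IsLeibnizBracket br) (x y z : V) :
    br x (br y z + br z y) =
      (br (br x y) z + br z (br x y)) + (br y (br x z) + br (br x z) y) := by
  rw [map_add, hbr x y z, hbr x z y]; abel

end AddCommMonoid

section AddCommGroup

variable {R V : Type*} [CommSemiring R] [AddCommGroup V] [Module R V]
  {br : V →ₗ[R] V →ₗ[R] V}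

theorem jacobiator_eq_zero (hbr : IsLeibnizBracket br) (x y z : V) :
    br x (br y z) - br (br x y) z - br y (br x z) = 0 := by
  rw [hbr]; abel

theorem symm_bracket_apply (hbr : IsLeibnizBracket br) (x y z : V) :
    br (br x y + br y x) z = 0 := by
  have hxy : br (br x y) z = br x (br y z) - br y (br x z) := by rw [hbr x y z]; abel
  have hyx : br (br y x) z = br y (br x z) - br x (br y z) := by rw [hbr y x z]; abel
  rw [map_add, LinearMap.add_apply, hxy, hyx]; abel

end AddCommGroup

end IsLeibnizBracket

/-- Any (left) Leibniz algebra `𝔤` canonically induces a hemistrict 2-term E₂L∞-algebra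
with `E₋₁ = 𝔤^ann = [𝔤,𝔤]`, `E₀ = 𝔤`, `ε₁` the inclusion, `ε₂` the bracket,
`ε₃ = 0` and `alt(a,b) = [a,b] + [b,a]`. -/
theorem leibniz_to_hemistrict_2term_E2LInfty
    (K : Type*) [Field K] [CharZero K] {V : Type*} [AddCommGroup V] [Module K V]
    (br : V →ₗ[K] V →ₗ[K] V)
    (hbr : ∀ x y z : V, br x (br y z) = br (br x y) z + br y (br x z)) :
    Is2TermE2LInfty K (Em1 := ↥(leibAnn K br)) (E0 := V)
      (fun y => (y : V))
      (fun a b => br a b)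
      (fun x y => ⟨br x (y : V), br_mem_leibAnn_left K br hbr x y.2⟩)
      (fun y x => ⟨br (y : V) x, br_mem_leibAnn_right K br _ _⟩)
      (fun _ _ _ => 0)
      (fun a b => ⟨br a b + br b a,
        add_mem (br_mem_leibAnn_right K br a b) (br_mem_leibAnn_right K br b a)⟩) := by
  let A := leibAnn K br
  have hL : IsLeibnizBracket br := hbr
  have mem_left := br_mem_leibAnn_left K br hbr
  have mem_right := br_mem_leibAnn_right K br
  have mem_symm (a b : V) : br a b + br b a ∈ A := add_mem (mem_right a b) (mem_right b a)
  exact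
  { lin_e1 := A.subtype.isLinear
    lin_e2_left := fun y => (br.flip y).isLinear
    lin_e2_right := fun x => (br x).isLinear
    lin_e2r_left := fun y => (LinearMap.codRestrict A (br.flip y) fun x => mem_left x y.2).isLinear
    lin_e2r_right := fun x =>
      (LinearMap.codRestrict A (br x ∘ₗ A.subtype) fun y => mem_left x y.2).isLinear
    lin_e2l_left := fun x =>
      (LinearMap.codRestrict A (br.flip x ∘ₗ A.subtype) fun y => mem_right _ _).isLinear
    lin_e2l_right := fun y => (LinearMap.codRestrict A (br y) (mem_right _)).isLinear
    lin_e3_1 := fun _ _ => (0 : V →ₗ[K] A).isLinear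
    lin_e3_2 := fun _ _ => (0 : V →ₗ[K] A).isLinear
    lin_e3_3 := fun _ _ => (0 : V →ₗ[K] A).isLinear
    lin_alt_left := fun y => (LinearMap.codRestrict A (br.flip y + br y) (mem_symm · y)).isLinear
    lin_alt_right := fun x => (LinearMap.codRestrict A (br x + br.flip x) (mem_symm x)).isLinear
    E1a := fun _ _ => rfl
    E1b := fun _ _ => rfl
    E1c := fun _ _ => rfl
    E2a := fun _ _ => rfl
    E2b := fun _ _ => rfl
    E3a := fun x₁ x₂ x₃ => by simpa using hL.jacobiator_eq_zero x₁ x₂ x₃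
    E3b := fun x₁ x₂ y => Subtype.ext <| by simpa using hL.jacobiator_eq_zero x₁ x₂ (y : V)
    E3c := fun x₁ y x₃ => Subtype.ext <| by simpa using hL.jacobiator_eq_zero x₁ (y : V) x₃
    E3d := fun y x₂ x₃ => Subtype.ext <| by simpa using hL.jacobiator_eq_zero (y : V) x₂ x₃
    E4 := fun _ _ => Subtype.ext (add_comm _ _)
    E5 := fun x₁ x₂ x₃ => Subtype.ext <| by simpa using (hL.symm_bracket_apply x₁ x₂ x₃).symm
    E6 := fun x₁ x₂ x₃ => Subtype.ext <| by
      simpa using (sub_eq_zero_of_eq (hL.apply_symm_bracket x₁ x₂ x₃).symm).symm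
    E7 := fun _ _ _ _ => by simp }
end

section
/- Let (E₋₁, E₀, ε₁, ε₂, ε₃, alt) be a 2-term E₂L∞-algebra over a field of characteristic zero. Define μ₁ := ε₁, μ₂(x₁,x₂) := ½(ε₂(x₁,x₂) − ε₂(x₂,x₁)) for x₁,x₂ ∈ E₀, μ₂(x,y) := ½(ε₂(x,y) − ε₂(y,x)) for x ∈ E₀ and y ∈ E₋₁, and μ₃(x₁,x₂,x₃) := (1/6) Σ_{σ∈S₃} sgn(σ)·(ε₃(x_{σ(1)},x_{σ(2)},x_{σ(3)}) + ½ alt(ε₂(x_{σ(1)},x_{σ(2)}),x_{σ(3)})). Then (E₋₁, E₀, μ₁, μ₂, μ₃) is a 2-term L∞-algebra. -/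
/-!
Put `T(x₁,x₂,x₃) = ε₃(x₁,x₂,x₃) + ½ alt(ε₂(x₁,x₂),x₃)`, so that `μ₃` is the antisymmetrisation
of `T`; then `μ₂` and `μ₃` are antisymmetric by construction. Each of (L3)–(L5) is antisymmetric
in its `E₀`-arguments, and it is the antisymmetrisation of a consequence of the E₂L∞ axioms:
(L3) of (E3) and (E2); (L4), in its two `E₀`-arguments, of (E1)–(E4); and (L5), over `S₄`, of
(E7) corrected by two identities: (E5) − (E6), which moves a product argument of `ε₃` from the
first slot to the last, and (E2) + (E3) + (E4), which turns `ε₂(x, ε₃) + ε₂(ε₃, x)` into minus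
the `alt` of a Jacobiator. What remains is an identity between formal multilinear expressions.
-/

open Equiv

section AlternatingSum

variable {E M : Type*} [AddCommGroup M]

def alternatingSum₃ (f : E → E → E → M) (a b c : E) : M :=
  f a b c - f a c b - f b a c + f b c a - f c b a + f c a b

def alternatingSum₄ (f : E → E → E → E → M) (a b c d : E) : M :=
  alternatingSum₃ (f · · · d) a b c - alternatingSum₃ (f · · · c) a b d
    + alternatingSum₃ (f · · · b) a c d - alternatingSum₃ (f · · · a) b c d

theorem alternatingSum₃_swap₁₂ (f : E → E → E → M) (a b c : E) :
    alternatingSum₃ f b a c = -alternatingSum₃ f a b c := by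
  simp only [alternatingSum₃]; abel

theorem alternatingSum₃_swap₂₃ (f : E → E → E → M) (a b c : E) :
    alternatingSum₃ f a c b = -alternatingSum₃ f a b c := by
  simp only [alternatingSum₃]; abel

theorem alternatingSum₃_congr {f g : E → E → E → M} (hfg : ∀ a b c, f a b c = g a b c)
    (a b c : E) : alternatingSum₃ f a b c = alternatingSum₃ g a b c := by
  simp only [alternatingSum₃, hfg]

theorem alternatingSum₄_congr {f g : E → E → E → E → M} (hfg : ∀ a b c d, f a b c d = g a b c d)
    (a b c d : E) : alternatingSum₄ f a b c d = alternatingSum₄ g a b c d := by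
  simp only [alternatingSum₄, alternatingSum₃, hfg]

theorem sum_perm_fin_succ {n : ℕ} (g : Perm (Fin (n + 1)) → M) :
    ∑ σ, g σ = ∑ p : Fin (n + 1), ∑ σ : Perm (Fin n), g (Perm.decomposeFin.symm (p, σ)) := by
  rw [← Perm.decomposeFin.symm.sum_comp, Fintype.sum_prod_type]

theorem sum_perm_fin_three_sign_smul (f : E → E → E → M) (v : Fin 3 → E) :
    ∑ σ : Perm (Fin 3), (Perm.sign σ : ℤ) • f (v (σ 0)) (v (σ 1)) (v (σ 2)) =
      alternatingSum₃ f (v 0) (v 1) (v 2) := by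
  -- so that `decomposeFin_symm_apply_succ` also applies to the last index
  rw [show (2 : Fin 3) = (1 : Fin 2).succ from rfl]
  simp only [sum_perm_fin_succ, Fin.sum_univ_succ, Fintype.sum_unique,
    Perm.decomposeFin_symm_apply_zero, Perm.decomposeFin_symm_apply_one,
    Perm.decomposeFin_symm_apply_succ, Perm.decomposeFin.symm_sign]
  simp [alternatingSum₃, swap_apply_def, Fin.ext_iff, sub_eq_add_neg, add_assoc]

end AlternatingSum

section Bundling

variable {R M N P Q : Type*} [CommSemiring R] [AddCommMonoid M] [AddCommMonoid N]
  [AddCommMonoid P] [AddCommMonoid Q] [Module R M] [Module R N] [Module R P] [Module R Q]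

theorem exists_linearMap₂_of_isLinearMap {f : M → N → P} (h₁ : ∀ n, IsLinearMap R (f · n))
    (h₂ : ∀ m, IsLinearMap R (f m)) : ∃ B : M →ₗ[R] N →ₗ[R] P, (B · ·) = f :=
  ⟨LinearMap.mk₂ R f (fun _ _ n => (h₁ n).map_add _ _) (fun _ _ n => (h₁ n).map_smul _ _)
    (fun m _ _ => (h₂ m).map_add _ _) (fun _ m _ => (h₂ m).map_smul _ _), rfl⟩

theorem exists_linearMap₃_of_isLinearMap {f : M → N → P → Q}
    (h₁ : ∀ n p, IsLinearMap R (f · n p)) (h₂ : ∀ m p, IsLinearMap R (f m · p))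
    (h₃ : ∀ m n, IsLinearMap R (f m n)) : ∃ B : M →ₗ[R] N →ₗ[R] P →ₗ[R] Q, (B · · ·) = f :=
  ⟨LinearMap.mk₂ R (fun m n => (h₃ m n).mk' (f m n))
    (fun _ _ n => LinearMap.ext fun p => (h₁ n p).map_add _ _)
    (fun _ _ n => LinearMap.ext fun p => (h₁ n p).map_smul _ _)
    (fun m _ _ => LinearMap.ext fun p => (h₂ m p).map_add _ _)
    (fun _ m _ => LinearMap.ext fun p => (h₂ m p).map_smul _ _), rfl⟩

end Bundling

section Antisymmetrisation

variable {K : Type*} [Field K] {Em1 E0 : Type*} [AddCommGroup Em1] [Module K Em1]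
  [AddCommGroup E0] [Module K E0]

def antisymmBracket (e2 : E0 →ₗ[K] E0 →ₗ[K] E0) (x₁ x₂ : E0) : E0 :=
  (2 : K)⁻¹ • (e2 x₁ x₂ - e2 x₂ x₁)

def antisymmAction (e2r : E0 →ₗ[K] Em1 →ₗ[K] Em1) (e2l : Em1 →ₗ[K] E0 →ₗ[K] Em1) (x : E0)
    (y : Em1) : Em1 :=
  (2 : K)⁻¹ • (e2r x y - e2l y x)

def antisymmTernary (e2 : E0 →ₗ[K] E0 →ₗ[K] E0) (e3 : E0 →ₗ[K] E0 →ₗ[K] E0 →ₗ[K] Em1)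
    (alt : E0 →ₗ[K] E0 →ₗ[K] Em1) (x₁ x₂ x₃ : E0) : Em1 :=
  (6 : K)⁻¹ • ∑ σ : Perm (Fin 3), (Perm.sign σ : ℤ) •
    (e3 (![x₁, x₂, x₃] (σ 0)) (![x₁, x₂, x₃] (σ 1)) (![x₁, x₂, x₃] (σ 2))
      + (2 : K)⁻¹ • alt (e2 (![x₁, x₂, x₃] (σ 0)) (![x₁, x₂, x₃] (σ 1))) (![x₁, x₂, x₃] (σ 2)))

theorem antisymmTernary_eq (e2 : E0 →ₗ[K] E0 →ₗ[K] E0)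
    (e3 : E0 →ₗ[K] E0 →ₗ[K] E0 →ₗ[K] Em1) (alt : E0 →ₗ[K] E0 →ₗ[K] Em1) (x₁ x₂ x₃ : E0) :
    antisymmTernary e2 e3 alt x₁ x₂ x₃ =
      (6 : K)⁻¹ • alternatingSum₃ (fun a b c => e3 a b c + (2 : K)⁻¹ • alt (e2 a b) c) x₁ x₂ x₃ :=
  congrArg _ (sum_perm_fin_three_sign_smul (fun a b c => e3 a b c + (2 : K)⁻¹ • alt (e2 a b) c) _)

end Antisymmetrisation

namespace Is2TermE2LInfty

variable {K : Type*} [Field K] [CharZero K] {Em1 E0 : Type*} [AddCommGroup Em1] [Module K Em1]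
  [AddCommGroup E0] [Module K E0] {e1 : Em1 →ₗ[K] E0} {e2 : E0 →ₗ[K] E0 →ₗ[K] E0}
  {e2r : E0 →ₗ[K] Em1 →ₗ[K] Em1} {e2l : Em1 →ₗ[K] E0 →ₗ[K] Em1}
  {e3 : E0 →ₗ[K] E0 →ₗ[K] E0 →ₗ[K] Em1} {alt : E0 →ₗ[K] E0 →ₗ[K] Em1}

local notation "μ₂" => antisymmBracket e2
local notation "μ₂'" => antisymmAction e2r e2l
local notation "μ₃" => antisymmTernary e2 e3 alt

theorem e3_sub_e3_rotate
    (h : Is2TermE2LInfty K e1 (e2 · ·) (e2r · ·) (e2l · ·) (e3 · · ·) (alt · ·)) (p x y : E0) :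
    e3 p x y - e3 x y p = e2l (alt p x) y - alt (e2 x p) y - alt p (e2 x y) + e2r x (alt p y) := by
  linear_combination (norm := module) h.E5 p x y - h.E6 x p y

theorem e2r_e3_add_e2l_e3
    (h : Is2TermE2LInfty K e1 (e2 · ·) (e2r · ·) (e2l · ·) (e3 · · ·) (alt · ·)) (x a b c : E0) :
    e2r x (e3 a b c) + e2l (e3 a b c) x =
      -alt (e2 a (e2 b c) - e2 (e2 a b) c - e2 b (e2 a c)) x := by
  rw [h.E2b, h.E4, h.E3a, map_neg, LinearMap.neg_apply, neg_neg]

theorem antisymmBracket_jacobiator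
    (h : Is2TermE2LInfty K e1 (e2 · ·) (e2r · ·) (e2l · ·) (e3 · · ·) (alt · ·)) (x₁ x₂ x₃ : E0) :
    μ₂ x₁ (μ₂ x₂ x₃) + μ₂ x₂ (μ₂ x₃ x₁) + μ₂ x₃ (μ₂ x₁ x₂) = -e1 (μ₃ x₁ x₂ x₃) := by
  have h3 := alternatingSum₃_congr h.E3a x₁ x₂ x₃
  have h2 := alternatingSum₃_congr (fun a b c => h.E2a (e2 a b) c) x₁ x₂ x₃
  simp only [antisymmBracket, antisymmTernary_eq]
  linear_combination (norm := (simp only [alternatingSum₃, map_add, map_sub, map_smul,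
    LinearMap.sub_apply, LinearMap.smul_apply]; module))
    (6 : K)⁻¹ • (h3 - (2 : K)⁻¹ • h2)

theorem antisymmAction_jacobiator
    (h : Is2TermE2LInfty K e1 (e2 · ·) (e2r · ·) (e2l · ·) (e3 · · ·) (alt · ·)) (x₁ x₂ : E0)
    (y : Em1) : μ₂' x₁ (μ₂' x₂ y) - μ₂' x₂ (μ₂' x₁ y) - μ₂' (μ₂ x₁ x₂) y = -μ₃ x₁ x₂ (e1 y) := by
  simp only [antisymmBracket, antisymmAction, antisymmTernary_eq]
  linear_combination (norm := (simp only [alternatingSum₃, map_sub, map_smul,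
    LinearMap.sub_apply, LinearMap.smul_apply]; module))
    (6 : K)⁻¹ • (h.E3b x₁ x₂ y - h.E3c x₁ y x₂ + h.E3d y x₁ x₂
      - h.E3b x₂ x₁ y + h.E3c x₂ y x₁ - h.E3d y x₂ x₁)
    - (12 : K)⁻¹ • (h.E2b x₁ (e2r x₂ y) - h.E2b x₁ (e2l y x₂) + h.E2b (e2 x₁ x₂) y
      - h.E2b x₂ (e2r x₁ y) + h.E2b x₂ (e2l y x₁) - h.E2b (e2 x₂ x₁) y)
    + (12 : K)⁻¹ • (congrArg (alt · x₂) (h.E1a x₁ y) + congrArg (alt · x₁) (h.E1b x₂ y)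
      + h.E4 (e1 (e2r x₂ y)) x₁ - h.E4 (e1 (e2l y x₂)) x₁
      - congrArg (alt · x₁) (h.E1a x₂ y) - congrArg (alt · x₂) (h.E1b x₁ y)
      - h.E4 (e1 (e2r x₁ y)) x₂ + h.E4 (e1 (e2l y x₁)) x₂)

set_option maxHeartbeats 1000000 in
theorem antisymmTernary_coherence
    (h : Is2TermE2LInfty K e1 (e2 · ·) (e2r · ·) (e2l · ·) (e3 · · ·) (alt · ·))
    (x₁ x₂ x₃ x₄ : E0) :
    μ₃ (μ₂ x₁ x₂) x₃ x₄ - μ₃ (μ₂ x₁ x₃) x₂ x₄ + μ₃ (μ₂ x₁ x₄) x₂ x₃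
      + μ₃ (μ₂ x₂ x₃) x₁ x₄ - μ₃ (μ₂ x₂ x₄) x₁ x₃ + μ₃ (μ₂ x₃ x₄) x₁ x₂
    = - μ₂' x₄ (μ₃ x₁ x₂ x₃) + μ₂' x₃ (μ₃ x₁ x₂ x₄)
      - μ₂' x₂ (μ₃ x₁ x₃ x₄) + μ₂' x₁ (μ₃ x₂ x₃ x₄) := by
  have h7 := alternatingSum₄_congr h.E7 x₁ x₂ x₃ x₄
  have hrotate :=
    alternatingSum₄_congr (fun a b c d => h.e3_sub_e3_rotate (e2 a b) c d) x₁ x₂ x₃ x₄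
  have hjac := alternatingSum₄_congr (fun a b c d => h.e2r_e3_add_e2l_e3 d a b c) x₁ x₂ x₃ x₄
  simp only [antisymmBracket, antisymmAction, antisymmTernary_eq]
  linear_combination (norm := skip) (24 : K)⁻¹ • (hrotate - h7 - hjac)
  simp only [alternatingSum₄, alternatingSum₃, map_add, map_sub, map_smul, LinearMap.add_apply,
    LinearMap.sub_apply, LinearMap.smul_apply]
  -- `module` is far faster on plain functions than on the coercions of bundled maps
  obtain ⟨f2, hf2⟩ : ∃ f : E0 → E0 → E0, ∀ x y, e2 x y = f x y := ⟨_, fun _ _ => rfl⟩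
  obtain ⟨f2r, hf2r⟩ : ∃ f : E0 → Em1 → Em1, ∀ x y, e2r x y = f x y := ⟨_, fun _ _ => rfl⟩
  obtain ⟨f2l, hf2l⟩ : ∃ f : Em1 → E0 → Em1, ∀ y x, e2l y x = f y x := ⟨_, fun _ _ => rfl⟩
  obtain ⟨f3, hf3⟩ : ∃ f : E0 → E0 → E0 → Em1, ∀ x y z, e3 x y z = f x y z :=
    ⟨_, fun _ _ _ => rfl⟩
  obtain ⟨falt, hfalt⟩ : ∃ f : E0 → E0 → Em1, ∀ x y, alt x y = f x y := ⟨_, fun _ _ => rfl⟩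
  simp only [hf2, hf2r, hf2l, hf3, hfalt]
  module

theorem is2TermLInfty_antisymmetrisation
    (h : Is2TermE2LInfty K e1 (e2 · ·) (e2r · ·) (e2l · ·) (e3 · · ·) (alt · ·)) :
    Is2TermLInfty K e1 μ₂ μ₂' μ₃ := by
  refine ⟨e1.isLinear, ?_, ?_, ?_, ?_, ?_, ?_, ?_,
    fun _ _ => by simp only [antisymmBracket]; module,
    fun _ _ _ => by simp only [antisymmTernary_eq]; rw [alternatingSum₃_swap₁₂, smul_neg],
    fun _ _ _ => by simp only [antisymmTernary_eq]; rw [alternatingSum₃_swap₂₃, smul_neg],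
    fun _ _ => by simp only [antisymmAction, antisymmBracket, map_smul, map_sub, h.E1a, h.E1b],
    fun _ _ => by simp only [antisymmAction, h.E1c]; module,
    h.antisymmBracket_jacobiator, h.antisymmAction_jacobiator, h.antisymmTernary_coherence⟩
  all_goals
    intros
    constructor <;> intros <;>
      simp only [antisymmBracket, antisymmAction, antisymmTernary_eq, alternatingSum₃, map_add,
        map_smul, LinearMap.add_apply, LinearMap.smul_apply] <;> module

end Is2TermE2LInfty

/-- Antisymmetrisation of a 2-term E₂L∞-algebra: the formulas
`μ₁ := ε₁`, `μ₂(x₁,x₂) := ½(ε₂(x₁,x₂) − ε₂(x₂,x₁))`,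
`μ₂(x,y) := ½(ε₂(x,y) − ε₂(y,x))` and
`μ₃(x₁,x₂,x₃) := (1/6) Σ_{σ∈S₃} sgn(σ)·(ε₃(x_{σ(1)},x_{σ(2)},x_{σ(3)})
  + ½ alt(ε₂(x_{σ(1)},x_{σ(2)}),x_{σ(3)}))`
yield a 2-term L∞-algebra. -/
theorem antisymmetrisation_of_2term_E2LInfty
    (K : Type*) [Field K] [CharZero K]
    {Em1 E0 : Type*} [AddCommGroup Em1] [Module K Em1] [AddCommGroup E0] [Module K E0]
    (e1 : Em1 → E0) (e2 : E0 → E0 → E0) (e2r : E0 → Em1 → Em1) (e2l : Em1 → E0 → Em1)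
    (e3 : E0 → E0 → E0 → Em1) (alt : E0 → E0 → Em1)
    (h : Is2TermE2LInfty K e1 e2 e2r e2l e3 alt) :
    Is2TermLInfty K e1
      (fun x₁ x₂ => (2 : K)⁻¹ • (e2 x₁ x₂ - e2 x₂ x₁))
      (fun x y => (2 : K)⁻¹ • (e2r x y - e2l y x))
      (fun x₁ x₂ x₃ => (6 : K)⁻¹ • ∑ σ : Equiv.Perm (Fin 3),
        ((Equiv.Perm.sign σ : ℤ)) •
          (e3 (![x₁, x₂, x₃] (σ 0)) (![x₁, x₂, x₃] (σ 1)) (![x₁, x₂, x₃] (σ 2))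
            + (2 : K)⁻¹ •
              alt (e2 (![x₁, x₂, x₃] (σ 0)) (![x₁, x₂, x₃] (σ 1)))
                (![x₁, x₂, x₃] (σ 2)))) := by
  obtain ⟨e1, rfl⟩ : ∃ f : Em1 →ₗ[K] E0, ⇑f = e1 := ⟨h.lin_e1.mk' e1, rfl⟩
  obtain ⟨e2, rfl⟩ := exists_linearMap₂_of_isLinearMap h.lin_e2_left h.lin_e2_right
  obtain ⟨e2r, rfl⟩ := exists_linearMap₂_of_isLinearMap h.lin_e2r_left h.lin_e2r_right
  obtain ⟨e2l, rfl⟩ := exists_linearMap₂_of_isLinearMap h.lin_e2l_left h.lin_e2l_right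
  obtain ⟨e3, rfl⟩ := exists_linearMap₃_of_isLinearMap h.lin_e3_1 h.lin_e3_2 h.lin_e3_3
  obtain ⟨alt, rfl⟩ := exists_linearMap₂_of_isLinearMap h.lin_alt_left h.lin_alt_right
  exact h.is2TermLInfty_antisymmetrisation
end

section
/- Let (𝔤, (−,−)) be a quadratic Lie algebra over a field k of characteristic zero and let θ ∈ k. On E₋₁ := k, E₀ := 𝔤 define ε₁ := 0, ε₂(x₁,x₂) := [x₁,x₂] for x₁,x₂ ∈ 𝔤, ε₂ := 0 whenever one argument lies in E₋₁, alt(x₁,x₂) := 2θ(x₁,x₂) ∈ k, and ε₃(x₁,x₂,x₃) := (1−θ)(x₁,[x₂,x₃]) ∈ k. Then for every θ ∈ k this data is a 2-term E₂L∞-algebra (the weak string Lie 2-algebra model string^{wk,θ}_sk(𝔤)); in particular ε₃ = 0 when θ = 1 and alt = 0 when θ = 0. -/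
/-!
The form `ω(x, y, z) = B x ⁅y, z⁆` is the Cartan 3-form of the invariant form `B`: it is
alternating, so it satisfies (E5), and it is a Chevalley–Eilenberg 3-cocycle, which is (E7)
once the action on `E₋₁ = k` is trivial. The only remaining axiom mixing `ε₃` and `alt` is (E6),
where both sides vanish separately: the left side by skew-symmetry of the bracket, the right side
by ad-invariance of `B`. Hence any multiples of `ω` and `B` may be used as `ε₃` and `alt`.
-/

namespace Is2TermE2LInfty

variable {K g V : Type*} [Field K] [CharZero K] [LieRing g] [LieAlgebra K g]
  [AddCommGroup V] [Module K V]

theorem of_lieAlgebra_trivialModule (e3 : g →ₗ[K] g →ₗ[K] g →ₗ[K] V) (alt : g →ₗ[K] g →ₗ[K] V)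
    (alt_comm : ∀ x y, alt x y = alt y x)
    (e3_add_swap_left : ∀ x y z, e3 x y z + e3 y x z = 0)
    (e3_add_swap_right : ∀ x y z, e3 x y z + e3 x z y = alt ⁅x, y⁆ z + alt y ⁅x, z⁆)
    (e3_cocycle : ∀ x₁ x₂ x₃ x₄,
      e3 x₁ ⁅x₂, x₃⁆ x₄ + e3 x₁ x₃ ⁅x₂, x₄⁆
        = e3 x₁ x₂ ⁅x₃, x₄⁆ + e3 ⁅x₁, x₂⁆ x₃ x₄ + e3 x₂ ⁅x₁, x₃⁆ x₄ + e3 x₂ x₃ ⁅x₁, x₄⁆) :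
    Is2TermE2LInfty K (fun _ : V => (0 : g)) (fun x₁ x₂ => ⁅x₁, x₂⁆) (fun _ _ => (0 : V))
      (fun _ _ => (0 : V)) (fun x₁ x₂ x₃ => e3 x₁ x₂ x₃) (fun x₁ x₂ => alt x₁ x₂) where
  lin_e1 := (0 : V →ₗ[K] g).isLinear
  lin_e2_left y := ⟨fun a b => add_lie a b y, fun c a => smul_lie c a y⟩
  lin_e2_right x := ⟨lie_add x, fun c a => lie_smul c x a⟩
  lin_e2r_left _ := (0 : g →ₗ[K] V).isLinear
  lin_e2r_right _ := (0 : V →ₗ[K] V).isLinear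
  lin_e2l_left _ := (0 : V →ₗ[K] V).isLinear
  lin_e2l_right _ := (0 : g →ₗ[K] V).isLinear
  lin_e3_1 y z := ((e3.flip y).flip z).isLinear
  lin_e3_2 x z := ((e3 x).flip z).isLinear
  lin_e3_3 x y := (e3 x y).isLinear
  lin_alt_left y := (alt.flip y).isLinear
  lin_alt_right x := (alt x).isLinear
  E1a x _ := (lie_zero x).symm
  E1b x _ := (zero_lie x).symm
  E1c _ _ := rfl
  E2a x y := by rw [← lie_skew y x, add_neg_cancel]
  E2b _ _ := by simp
  E3a x₁ x₂ x₃ := by rw [leibniz_lie, neg_zero]; abel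
  E3b _ _ _ := by simp
  E3c _ _ _ := by simp
  E3d _ _ _ := by simp
  E4 := alt_comm
  E5 := e3_add_swap_left
  E6 x₁ x₂ x₃ := by rw [e3_add_swap_right, sub_zero]
  E7 x₁ x₂ x₃ x₄ := by simpa using e3_cocycle x₁ x₂ x₃ x₄

end Is2TermE2LInfty

namespace LinearMap.BilinForm

variable {R L : Type*} [CommRing R] [LieRing L]

theorem lieInvariant_of_lie_apply_eq_apply_lie [Module R L] (B : LinearMap.BilinForm R L)
    (h : ∀ x y z, B ⁅x, y⁆ z = B x ⁅y, z⁆) : B.lieInvariant L :=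
  fun x y z => by
    have h' := h y x z
    rw [← lie_skew, map_neg, LinearMap.neg_apply] at h'
    rw [← h', neg_neg]

variable [LieAlgebra R L] (B : LinearMap.BilinForm R L)

def cartanForm : L →ₗ[R] L →ₗ[R] L →ₗ[R] R :=
  (LinearMap.llcomp R L L R).compl₂ (LieModule.toEnd R L L : L →ₗ[R] Module.End R L) ∘ₗ B

@[simp]
theorem cartanForm_apply (x y z : L) : B.cartanForm x y z = B x ⁅y, z⁆ := rfl

variable {B}

theorem cartanForm_swap_right (x y z : L) : B.cartanForm x y z + B.cartanForm x z y = 0 := by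
  rw [cartanForm_apply, cartanForm_apply, ← lie_skew, map_neg, neg_add_cancel]

variable (hB : B.lieInvariant L)
include hB

theorem cartanForm_swap_left (x y z : L) : B.cartanForm x y z + B.cartanForm y x z = 0 := by
  have h := hB y x z
  rw [← lie_skew, map_neg, LinearMap.neg_apply, neg_inj] at h
  rw [cartanForm_apply, cartanForm_apply, ← h, hB, neg_add_cancel]

theorem cartanForm_cocycle (x₁ x₂ x₃ x₄ : L) :
    B.cartanForm x₁ ⁅x₂, x₃⁆ x₄ + B.cartanForm x₁ x₃ ⁅x₂, x₄⁆
      = B.cartanForm x₁ x₂ ⁅x₃, x₄⁆ + B.cartanForm ⁅x₁, x₂⁆ x₃ x₄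
        + B.cartanForm x₂ ⁅x₁, x₃⁆ x₄ + B.cartanForm x₂ x₃ ⁅x₁, x₄⁆ := by
  have jacobi (x : L) : ⁅x, ⁅x₃, x₄⁆⁆ = ⁅⁅x, x₃⁆, x₄⁆ + ⁅x₃, ⁅x, x₄⁆⁆ := leibniz_lie x x₃ x₄
  simp only [cartanForm_apply, hB x₁ x₂, jacobi x₁, jacobi x₂, map_add]
  abel

end LinearMap.BilinForm

/-- For a quadratic Lie algebra `(𝔤, (−,−))` and `θ ∈ k`, the data
`E₋₁ = k`, `E₀ = 𝔤`, `ε₁ = 0`, `ε₂ = [−,−]` (and `ε₂ = 0` in mixed degrees),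
`alt(x₁,x₂) = 2θ(x₁,x₂)`, `ε₃(x₁,x₂,x₃) = (1−θ)(x₁,[x₂,x₃])` is a 2-term
E₂L∞-algebra (the weak string Lie 2-algebra model); in particular `ε₃ = 0` when
`θ = 1`, and `alt = 0` when `θ = 0`. -/
theorem weak_string_model_is_2term_E2LInfty
    (K : Type*) [Field K] [CharZero K]
    (g : Type*) [LieRing g] [LieAlgebra K g]
    (B : g →ₗ[K] g →ₗ[K] K)
    (hsymm : ∀ x y : g, B x y = B y x)
    (hinv : ∀ x y z : g, B ⁅x, y⁆ z = B x ⁅y, z⁆)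
    (θ : K) :
    Is2TermE2LInfty K (Em1 := K) (E0 := g)
      (fun _ => (0 : g))
      (fun x₁ x₂ => ⁅x₁, x₂⁆)
      (fun _ _ => (0 : K))
      (fun _ _ => (0 : K))
      (fun x₁ x₂ x₃ => (1 - θ) * B x₁ ⁅x₂, x₃⁆)
      (fun x₁ x₂ => 2 * θ * B x₁ x₂)
    ∧ (θ = 1 → ∀ x₁ x₂ x₃ : g, (1 - θ) * B x₁ ⁅x₂, x₃⁆ = 0)
    ∧ (θ = 0 → ∀ x₁ x₂ : g, 2 * θ * B x₁ x₂ = 0) := by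
  have hB : LinearMap.BilinForm.lieInvariant g B :=
    LinearMap.BilinForm.lieInvariant_of_lie_apply_eq_apply_lie B hinv
  refine ⟨.of_lieAlgebra_trivialModule ((1 - θ) • LinearMap.BilinForm.cartanForm B) ((2 * θ) • B)
    ?_ ?_ ?_ ?_, fun hθ _ _ _ => by rw [hθ, sub_self, zero_mul],
    fun hθ _ _ => by rw [hθ, mul_zero, zero_mul]⟩
  · intro x y
    simp only [LinearMap.smul_apply, hsymm x y]
  · intro x y z
    simp only [LinearMap.smul_apply, ← smul_add, LinearMap.BilinForm.cartanForm_swap_left hB,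
      smul_zero]
  · intro x y z
    have ad_invariant : B ⁅x, y⁆ z + B y ⁅x, z⁆ = 0 := by rw [hB, neg_add_cancel]
    simp only [LinearMap.smul_apply, ← smul_add, LinearMap.BilinForm.cartanForm_swap_right,
      ad_invariant, smul_zero]
  · intro x₁ x₂ x₃ x₄
    simp only [LinearMap.smul_apply, ← smul_add, LinearMap.BilinForm.cartanForm_cocycle hB]
end

section
/- Let (𝔤, (−,−)) be a quadratic Lie algebra over a field k of characteristic zero. Then L₋₁ := k, L₀ := 𝔤, μ₁ := 0, μ₂(x₁,x₂) := [x₁,x₂] for x₁,x₂ ∈ 𝔤, μ₂(x,r) := 0 for x ∈ 𝔤 and r ∈ k, and μ₃(x₁,x₂,x₃) := (x₁,[x₂,x₃]) define a 2-term L∞-algebra (the skeletal model string_sk(𝔤) of the string Lie 2-algebra); in particular μ₃ is totally antisymmetric and satisfies the coherence law (L5). -/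
/-!
Symmetry and invariance make `(x₁, [x₂, x₃])` invariant under cyclic permutations; being
alternating in `x₂, x₃`, it is then totally antisymmetric. In (L5) the right side vanishes since
`μ₂` is zero in mixed degrees. On the left, symmetry identifies the last three terms with the
first three, and invariance turns `([x₁, a], [b, c])` into `(x₁, [a, [b, c]])`, so the left side
is `2 (x₁, [x₂, [x₃, x₄]] − [x₃, [x₂, x₄]] + [x₄, [x₂, x₃]])`, which is zero by the Jacobi
identity.
-/

namespace LinearMap

variable {K g : Type*} [CommRing K] [LieRing g] [LieAlgebra K g] (B : g →ₗ[K] g →ₗ[K] K)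

theorem apply_lie_swap (x y z : g) : B x ⁅z, y⁆ = -B x ⁅y, z⁆ := by
  rw [← lie_skew, map_neg]

theorem apply_lie_cyclic (hsymm : ∀ x y : g, B x y = B y x)
    (hinv : ∀ x y z : g, B ⁅x, y⁆ z = B x ⁅y, z⁆) (x y z : g) :
    B x ⁅y, z⁆ = B y ⁅z, x⁆ :=
  (hsymm _ _).trans (hinv _ _ _)

theorem apply_lie_lie_jacobi (x₁ x₂ x₃ x₄ : g) :
    B x₁ ⁅x₂, ⁅x₃, x₄⁆⁆ - B x₁ ⁅x₃, ⁅x₂, x₄⁆⁆ + B x₁ ⁅x₄, ⁅x₂, x₃⁆⁆ = 0 := by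
  rw [← map_sub, ← map_add, ← lie_lie, ← lie_skew x₄, add_neg_cancel, map_zero]

theorem apply_lie_lie_alternating_sum_eq_zero (hsymm : ∀ x y : g, B x y = B y x)
    (hinv : ∀ x y z : g, B ⁅x, y⁆ z = B x ⁅y, z⁆) (x₁ x₂ x₃ x₄ : g) :
    B ⁅x₁, x₂⁆ ⁅x₃, x₄⁆ - B ⁅x₁, x₃⁆ ⁅x₂, x₄⁆ + B ⁅x₁, x₄⁆ ⁅x₂, x₃⁆
      + B ⁅x₂, x₃⁆ ⁅x₁, x₄⁆ - B ⁅x₂, x₄⁆ ⁅x₁, x₃⁆ + B ⁅x₃, x₄⁆ ⁅x₁, x₂⁆ = 0 := by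
  rw [hsymm ⁅x₂, x₃⁆, hsymm ⁅x₂, x₄⁆, hsymm ⁅x₃, x₄⁆, hinv, hinv, hinv]
  linear_combination 2 * apply_lie_lie_jacobi B x₁ x₂ x₃ x₄

end LinearMap

/-- For a quadratic Lie algebra `(𝔤, (−,−))`, the data `L₋₁ = k`, `L₀ = 𝔤`,
`μ₁ = 0`, `μ₂ = [−,−]` (and `μ₂ = 0` in mixed degrees),
`μ₃(x₁,x₂,x₃) = (x₁,[x₂,x₃])` defines a 2-term L∞-algebra (the skeletal string
Lie 2-algebra model); in particular `μ₃` is totally antisymmetric and satisfies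
the coherence law (L5) (these are fields of the structure). -/
theorem skeletal_string_is_2term_LInfty
    (K : Type*) [Field K] [CharZero K]
    (g : Type*) [LieRing g] [LieAlgebra K g]
    (B : g →ₗ[K] g →ₗ[K] K)
    (hsymm : ∀ x y : g, B x y = B y x)
    (hinv : ∀ x y z : g, B ⁅x, y⁆ z = B x ⁅y, z⁆) :
    Is2TermLInfty K (Lm1 := K) (L0 := g)
      (fun _ => (0 : g))
      (fun x₁ x₂ => ⁅x₁, x₂⁆)
      (fun _ _ => (0 : K))
      (fun x₁ x₂ x₃ => B x₁ ⁅x₂, x₃⁆) := by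
  exact {
    lin_m1 := (0 : K →ₗ[K] g).isLinear
    lin_m2_left y := ⟨(add_lie · · y), (smul_lie · · y)⟩
    lin_m2_right x := ⟨lie_add x, (lie_smul · x)⟩
    lin_m2r_left _ := (0 : g →ₗ[K] K).isLinear
    lin_m2r_right _ := (0 : K →ₗ[K] K).isLinear
    lin_m3_1 y z := (B.flip ⁅y, z⁆).isLinear
    lin_m3_2 x z := ⟨by simp [add_lie], by simp [smul_lie]⟩
    lin_m3_3 x y := ((B x).comp (LieModule.toEnd K g g y)).isLinear
    m2_antisym x₁ x₂ := (lie_skew x₁ x₂).symm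
    m3_antisym12 x₁ x₂ x₃ := by
      rw [B.apply_lie_cyclic hsymm hinv, LinearMap.apply_lie_swap]
    m3_antisym23 x₁ x₂ x₃ := B.apply_lie_swap x₁ x₃ x₂
    L1 _ _ := (lie_zero _).symm
    L2 _ _ := add_zero 0
    L3 x₁ x₂ x₃ := by rw [lie_jacobi, neg_zero]
    L4 _ _ _ := by simp
    L5 x₁ x₂ x₃ x₄ := by
      simpa using B.apply_lie_lie_alternating_sum_eq_zero hsymm hinv x₁ x₂ x₃ x₄ }
end

section
/- Let (E₋₁, E₀, ε₁, ε₂, ε₃, alt) be a 2-term E₂L∞-algebra with alt = 0 (a semistrict 2-term E₂L∞-algebra). Then ε₂ is antisymmetric on E₀×E₀ and satisfies ε₂(x,y) = −ε₂(y,x) for x ∈ E₀, y ∈ E₋₁, the map ε₃ is totally antisymmetric, and (E₋₁, E₀, μ₁ := ε₁, μ₂ := ε₂, μ₃ := ε₃) is a 2-term L∞-algebra. -/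
/-! With `alt = 0` the axioms (E2), (E5) and (E6) say exactly that `ε₂` and `ε₃` are
antisymmetric. Once this is known, (E3) and (E7) become the L∞ Jacobi identities (L3) and (L5)
after reordering arguments, while (L2) and (L4) hold in every 2-term E₂L∞-algebra: (L2) is (E2)
evaluated on a boundary combined with (E1), and (L4) is a rearrangement of (E3). -/

namespace Is2TermE2LInfty

variable {K : Type*} [Field K] [CharZero K]
  {Em1 E0 : Type*} [AddCommGroup Em1] [Module K Em1] [AddCommGroup E0] [Module K E0]
  {e1 : Em1 → E0} {e2 : E0 → E0 → E0} {e2r : E0 → Em1 → Em1} {e2l : Em1 → E0 → Em1}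
  {e3 : E0 → E0 → E0 → Em1} {alt : E0 → E0 → Em1}

theorem e2r_e1_add_e2r_e1 (h : Is2TermE2LInfty K e1 e2 e2r e2l e3 alt) (y₁ y₂ : Em1) :
    e2r (e1 y₁) y₂ + e2r (e1 y₂) y₁ = alt (e1 y₂) (e1 y₁) := by
  rw [← h.E2b, h.E1c, add_comm]

theorem e2r_jacobi (h : Is2TermE2LInfty K e1 e2 e2r e2l e3 alt) (x₁ x₂ : E0) (y : Em1) :
    e2r x₁ (e2r x₂ y) - e2r x₂ (e2r x₁ y) - e2r (e2 x₁ x₂) y = - e3 x₁ x₂ (e1 y) := by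
  rw [← h.E3b]
  abel

theorem e2_antisymm (h : Is2TermE2LInfty K e1 e2 e2r e2l e3 alt)
    (halt : ∀ x₁ x₂, alt x₁ x₂ = 0) (x₁ x₂ : E0) :
    e2 x₁ x₂ = - e2 x₂ x₁ :=
  eq_neg_of_add_eq_zero_left (by rw [h.E2a, halt, h.lin_e1.map_zero])

theorem e2r_eq_neg_e2l (h : Is2TermE2LInfty K e1 e2 e2r e2l e3 alt)
    (halt : ∀ x₁ x₂, alt x₁ x₂ = 0) (x : E0) (y : Em1) :
    e2r x y = - e2l y x :=
  eq_neg_of_add_eq_zero_left (by rw [h.E2b, halt])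

theorem e3_antisymm₁₂ (h : Is2TermE2LInfty K e1 e2 e2r e2l e3 alt)
    (halt : ∀ x₁ x₂, alt x₁ x₂ = 0) (x₁ x₂ x₃ : E0) :
    e3 x₁ x₂ x₃ = - e3 x₂ x₁ x₃ :=
  eq_neg_of_add_eq_zero_left (by rw [h.E5, halt, (h.lin_e2l_left x₃).map_zero])

theorem e3_antisymm₂₃ (h : Is2TermE2LInfty K e1 e2 e2r e2l e3 alt)
    (halt : ∀ x₁ x₂, alt x₁ x₂ = 0) (x₁ x₂ x₃ : E0) :
    e3 x₁ x₂ x₃ = - e3 x₁ x₃ x₂ :=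
  eq_neg_of_add_eq_zero_left (by
    rw [h.E6, halt, halt, halt, (h.lin_e2r_right x₁).map_zero, add_zero, sub_zero])

theorem e3_rotate (h : Is2TermE2LInfty K e1 e2 e2r e2l e3 alt)
    (halt : ∀ x₁ x₂, alt x₁ x₂ = 0) (x₁ x₂ x₃ : E0) :
    e3 x₁ x₂ x₃ = e3 x₃ x₁ x₂ := by
  rw [h.e3_antisymm₂₃ halt x₁ x₂ x₃, h.e3_antisymm₁₂ halt x₁ x₃ x₂, neg_neg]

theorem e2_jacobi (h : Is2TermE2LInfty K e1 e2 e2r e2l e3 alt)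
    (halt : ∀ x₁ x₂, alt x₁ x₂ = 0) (x₁ x₂ x₃ : E0) :
    e2 x₁ (e2 x₂ x₃) + e2 x₂ (e2 x₃ x₁) + e2 x₃ (e2 x₁ x₂) = - e1 (e3 x₁ x₂ x₃) := by
  have h₃ := h.E3a x₁ x₂ x₃
  rw [h.e2_antisymm halt (e2 x₁ x₂) x₃, h.e2_antisymm halt x₁ x₃,
    (h.lin_e2_right x₂).map_neg] at h₃
  linear_combination (norm := abel) h₃

theorem e3_higher_jacobi (h : Is2TermE2LInfty K e1 e2 e2r e2l e3 alt)
    (halt : ∀ x₁ x₂, alt x₁ x₂ = 0) (x₁ x₂ x₃ x₄ : E0) :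
    e3 (e2 x₁ x₂) x₃ x₄ - e3 (e2 x₁ x₃) x₂ x₄ + e3 (e2 x₁ x₄) x₂ x₃
      + e3 (e2 x₂ x₃) x₁ x₄ - e3 (e2 x₂ x₄) x₁ x₃ + e3 (e2 x₃ x₄) x₁ x₂
    = - e2r x₄ (e3 x₁ x₂ x₃) + e2r x₃ (e3 x₁ x₂ x₄)
      - e2r x₂ (e3 x₁ x₃ x₄) + e2r x₁ (e3 x₂ x₃ x₄) := by
  have h₇ := h.E7 x₁ x₂ x₃ x₄
  rw [h.e3_antisymm₁₂ halt x₁ (e2 x₂ x₃) x₄, h.e3_rotate halt x₁ x₃ (e2 x₂ x₄),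
    ← neg_neg (e2l _ x₄), ← h.e2r_eq_neg_e2l halt x₄, h.e3_rotate halt x₁ x₂ (e2 x₃ x₄),
    h.e3_antisymm₁₂ halt x₂ (e2 x₁ x₃) x₄, h.e3_rotate halt x₂ x₃ (e2 x₁ x₄)] at h₇
  linear_combination (norm := abel) -h₇

theorem toIs2TermLInfty (h : Is2TermE2LInfty K e1 e2 e2r e2l e3 alt)
    (halt : ∀ x₁ x₂, alt x₁ x₂ = 0) :
    Is2TermLInfty K e1 e2 e2r e3 where
  lin_m1 := h.lin_e1
  lin_m2_left := h.lin_e2_left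
  lin_m2_right := h.lin_e2_right
  lin_m2r_left := h.lin_e2r_left
  lin_m2r_right := h.lin_e2r_right
  lin_m3_1 := h.lin_e3_1
  lin_m3_2 := h.lin_e3_2
  lin_m3_3 := h.lin_e3_3
  m2_antisym := h.e2_antisymm halt
  m3_antisym12 := h.e3_antisymm₁₂ halt
  m3_antisym23 := h.e3_antisymm₂₃ halt
  L1 := h.E1a
  L2 y₁ y₂ := by rw [h.e2r_e1_add_e2r_e1, halt]
  L3 := h.e2_jacobi halt
  L4 := h.e2r_jacobi
  L5 := h.e3_higher_jacobi halt

end Is2TermE2LInfty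

/-- A 2-term E₂L∞-algebra with trivial alternator (a semistrict 2-term E₂L∞-algebra)
has antisymmetric `ε₂` (also in mixed degrees, via `ε₂(x,y) = −ε₂(y,x)`),
totally antisymmetric `ε₃`, and `(E₋₁, E₀, ε₁, ε₂, ε₃)` is a 2-term L∞-algebra. -/
theorem semistrict_2term_E2LInfty_is_LInfty
    (K : Type*) [Field K] [CharZero K]
    {Em1 E0 : Type*} [AddCommGroup Em1] [Module K Em1] [AddCommGroup E0] [Module K E0]
    (e1 : Em1 → E0) (e2 : E0 → E0 → E0) (e2r : E0 → Em1 → Em1) (e2l : Em1 → E0 → Em1)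
    (e3 : E0 → E0 → E0 → Em1) (alt : E0 → E0 → Em1)
    (h : Is2TermE2LInfty K e1 e2 e2r e2l e3 alt)
    (halt : ∀ x₁ x₂ : E0, alt x₁ x₂ = 0) :
    (∀ x₁ x₂ : E0, e2 x₁ x₂ = - e2 x₂ x₁)
    ∧ (∀ (x : E0) (y : Em1), e2r x y = - e2l y x)
    ∧ (∀ x₁ x₂ x₃ : E0, e3 x₁ x₂ x₃ = - e3 x₂ x₁ x₃)
    ∧ (∀ x₁ x₂ x₃ : E0, e3 x₁ x₂ x₃ = - e3 x₁ x₃ x₂)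
    ∧ Is2TermLInfty K e1 e2 e2r e3 :=
  ⟨h.e2_antisymm halt, h.e2r_eq_neg_e2l halt, h.e3_antisymm₁₂ halt, h.e3_antisymm₂₃ halt,
    h.toIs2TermLInfty halt⟩
end
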